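/- Let g be a Lie algebra over ℂ acting by derivations on a commutative associative unital ℂ-algebra A (so A is a module over the universal enveloping algebra U(g), and each x ∈ g acts as a derivation). Let φ = Σ φ¹ ⊗ φ² ⊗ φ³ ∈ U(g) ⊗ U(g) ⊗ U(g), and define Pφ(a,b,c) = Σ (φ¹·a)(φ²·b)(φ³·c) for a, b, c ∈ A. Let μ₁, μ₂ : A × A → A be ℂ-bilinear maps satisfying, for all a, b, c ∈ A: (i) the Hochschild 2-cocycle condition a·μ₁(b,c) − μ₁(ab,c) + μ₁(a,bc) − μ₁(a,b)·c = 0; and (ii) μ₂(a,bc) + μ₁(a,μ₁(b,c)) + a·μ₂(b,c) + Pφ(a,b,c) = μ₂(ab,c) + μ₁(μ₁(a,b),c) + μ₂(a,b)·c. Define f(a,b) = μ₁(a,b) − μ₁(b,a). Then: (1) f is a biderivation: f(ab,c) = a·f(b,c) + f(a,c)·b for all a, b, c; (2) if moreover μ₁ is g-invariant, i.e. x·μ₁(a,b) = μ₁(x·a, b) + μ₁(a, x·b) for all x ∈ g, then f is g-invariant in the same sense; (3) f(f(a,b),c) + f(f(b,c),a) + f(f(c,a),b) = Σ_{σ ∈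 S₃} sgn(σ) Pφ(a_{σ(1)}, a_{σ(2)}, a_{σ(3)}), where (a₁,a₂,a₃) = (a,b,c). -/

import Mathlib

/-! (1) is the classical fact that the antisymmetrization of a Hochschild 2-cocycle on a
commutative algebra is a biderivation, and (2) holds because the action is linear.
For (3), condition (ii) says that the associator of `μ₁` equals `Pφ` plus the Hochschild
coboundary of `μ₂`. Alternated over `S₃`, the associator of any bilinear product becomes the
Jacobiator of its antisymmetrization, while the coboundary of any bilinear map on a commutative
algebra cancels out. -/

open scoped TensorProduct

namespace Stmt5

variable (g : Type) [LieRing g] [LieAlgebra ℂ g]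
variable (A : Type) [CommRing A] [Algebra ℂ A]

attribute [local instance 100] LieRing.ofAssociativeRing

noncomputable abbrev U : Type := UniversalEnvelopingAlgebra ℂ g

noncomputable abbrev iota : g →ₗ[ℂ] U g :=
  (UniversalEnvelopingAlgebra.ι ℂ : g →ₗ⁅ℂ⁆ U g).toLinearMap

/-- Given a `U(g)`-module structure `ρ` on `A` and `φ = Σ φ¹ ⊗ φ² ⊗ φ³ ∈ U(g)⊗³`,
this is `Pφ(a,b,c) = Σ (φ¹·a)(φ²·b)(φ³·c)`. -/
noncomputable def Pphi (ρ : U g →ₐ[ℂ] Module.End ℂ A)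
    (φ : U g ⊗[ℂ] (U g ⊗[ℂ] U g)) (a b c : A) : A :=
  TensorProduct.lift
    ((LinearMap.mul ℂ A).compl₁₂ (ρ.toLinearMap.flip a)
      (TensorProduct.lift
        ((LinearMap.mul ℂ A).compl₁₂ (ρ.toLinearMap.flip b) (ρ.toLinearMap.flip c))))
    φ

open Equiv

section Alternation

variable {α M : Type*} [AddCommGroup M]

def alternatingSum (F : α → α → α → M) (a b c : α) : M :=
  ∑ σ : Perm (Fin 3),
    (Perm.sign σ : ℤ) • F (![a, b, c] (σ 0)) (![a, b, c] (σ 1)) (![a, b, c] (σ 2))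

theorem alternatingSum_eq (F : α → α → α → M) (a b c : α) :
    alternatingSum F a b c = F a b c - F a c b - F b a c + F b c a + F c a b - F c b a := by
  have univ_eq : (Finset.univ : Finset (Perm (Fin 3))) =
      {1, swap 0 1, swap 0 2, swap 1 2, swap 0 1 * swap 1 2, swap 1 2 * swap 0 1} := by
    decide
  rw [alternatingSum, univ_eq]
  simp +decide only [Finset.sum_insert, Finset.sum_singleton, Finset.mem_insert,
    Finset.mem_singleton, Perm.sign_one, Perm.sign_mul, Perm.sign_swap', Perm.coe_one, id_eq,
    Perm.coe_mul, Function.comp_apply, swap_apply_left, swap_apply_right, swap_apply_of_ne_of_ne,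
    Matrix.cons_val_zero, Matrix.cons_val_one, Matrix.cons_val, Units.val_one, Units.val_neg,
    one_smul, neg_smul, ite_false, mul_one, mul_neg, neg_neg, ne_eq, not_false_eq_true]
  abel

theorem alternatingSum_add (F G : α → α → α → M) (a b c : α) :
    alternatingSum (F + G) a b c = alternatingSum F a b c + alternatingSum G a b c := by
  simp only [alternatingSum_eq, Pi.add_apply]
  abel

end Alternation

section Hochschild

variable {R S : Type*} [CommSemiring R] [CommRing S] [Algebra R S]

def hochschildCoboundary (ν : S →ₗ[R] S →ₗ[R] S) (a b c : S) : S :=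
  a * ν b c - ν (a * b) c + ν a (b * c) - ν a b * c

theorem alternatingSum_hochschildCoboundary (ν : S →ₗ[R] S →ₗ[R] S) (a b c : S) :
    alternatingSum (hochschildCoboundary ν) a b c = 0 := by
  simp only [alternatingSum_eq, hochschildCoboundary, mul_comm b a, mul_comm c a, mul_comm c b]
  ring

theorem sub_flip_apply_mul_left (μ : S →ₗ[R] S →ₗ[R] S)
    (hμ : ∀ a b c, hochschildCoboundary μ a b c = 0) (a b c : S) :
    (μ - μ.flip) (a * b) c = a * (μ - μ.flip) b c + (μ - μ.flip) a c * b := by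
  have habc := hμ a b c
  have hacb := hμ a c b
  have hcab := hμ c a b
  simp only [hochschildCoboundary, mul_comm c a, mul_comm c b] at habc hacb hcab
  simp only [LinearMap.sub_apply, LinearMap.flip_apply]
  linear_combination hacb - habc - hcab

end Hochschild

section Associator

variable {R M : Type*} [CommSemiring R] [AddCommGroup M] [Module R M]

def associator (μ : M →ₗ[R] M →ₗ[R] M) (a b c : M) : M :=
  μ (μ a b) c - μ a (μ b c)

theorem sub_flip_apply_of_leibniz (μ : M →ₗ[R] M →ₗ[R] M) (D : M →ₗ[R] M)
    (hD : ∀ a b, D (μ a b) = μ (D a) b + μ a (D b)) (a b : M) :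
    D ((μ - μ.flip) a b) = (μ - μ.flip) (D a) b + (μ - μ.flip) a (D b) := by
  simp only [LinearMap.sub_apply, LinearMap.flip_apply, map_sub, hD]
  abel

theorem jacobi_sub_flip (μ : M →ₗ[R] M →ₗ[R] M) (a b c : M) :
    (μ - μ.flip) ((μ - μ.flip) a b) c + (μ - μ.flip) ((μ - μ.flip) b c) a +
        (μ - μ.flip) ((μ - μ.flip) c a) b =
      alternatingSum (associator μ) a b c := by
  simp only [alternatingSum_eq, associator, LinearMap.sub_apply, LinearMap.flip_apply, map_sub]
  abel

end Associator

theorem antisymmetrization_is_phi_bracket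
    (ρ : U g →ₐ[ℂ] Module.End ℂ A)
    (φ : U g ⊗[ℂ] (U g ⊗[ℂ] U g))
    (μ₁ μ₂ : A →ₗ[ℂ] A →ₗ[ℂ] A)
    (hcocycle : ∀ a b c : A,
      a * μ₁ b c - μ₁ (a * b) c + μ₁ a (b * c) - μ₁ a b * c = 0)
    (hsecond : ∀ a b c : A,
      μ₂ a (b * c) + μ₁ a (μ₁ b c) + a * μ₂ b c + Pphi g A ρ φ a b c =
        μ₂ (a * b) c + μ₁ (μ₁ a b) c + μ₂ a b * c)
    (f : A → A → A) (hf : ∀ a b : A, f a b = μ₁ a b - μ₁ b a) :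
    (∀ a b c : A, f (a * b) c = a * f b c + f a c * b) ∧
    ((∀ (x : g) (a b : A),
        ρ (iota g x) (μ₁ a b) = μ₁ (ρ (iota g x) a) b + μ₁ a (ρ (iota g x) b)) →
      ∀ (x : g) (a b : A),
        ρ (iota g x) (f a b) = f (ρ (iota g x) a) b + f a (ρ (iota g x) b)) ∧
    (∀ a b c : A,
      f (f a b) c + f (f b c) a + f (f c a) b =
        ∑ σ : Equiv.Perm (Fin 3),
          (Equiv.Perm.sign σ : ℤ) •
            Pphi g A ρ φ (![a, b, c] (σ 0)) (![a, b, c] (σ 1)) (![a, b, c] (σ 2))) := by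
  obtain rfl : f = fun a b => (μ₁ - μ₁.flip) a b := by
    ext a b
    simp [hf]
  have associator_eq : associator μ₁ = Pphi g A ρ φ + hochschildCoboundary μ₂ := by
    ext a b c
    simp only [associator, hochschildCoboundary, Pi.add_apply]
    linear_combination -hsecond a b c
  refine ⟨sub_flip_apply_mul_left μ₁ hcocycle,
    fun hinv x => sub_flip_apply_of_leibniz _ _ (hinv x), fun a b c => ?_⟩
  calc _ = alternatingSum (associator μ₁) a b c := jacobi_sub_flip μ₁ a b c
    _ = alternatingSum (Pphi g A ρ φ) a b c := by
      rw [associator_eq, alternatingSum_add, alternatingSum_hochschildCoboundary, add_zero]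

end Stmt5
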